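/- Suppose S is a real-valued scoring rule for binary outcomes such that Ev_S(a,b,c,d) = Youden(a,b,c,d) for every quadruple of natural numbers (a,b,c,d) with a + c ≠ 0 and b + d ≠ 0. Then S(1,1) − S(0,1) = 1. -/
import Mathlib


/-- The Youden index of a 2×2 contingency table `(a,b,c,d)` (real arithmetic,
with the convention `x/0 = 0`). -/
noncomputable def Youden (a b c d : ℕ) : ℝ :=
  (a : ℝ) / ((a : ℝ) + (c : ℝ)) + (d : ℝ) / ((b : ℝ) + (d : ℝ)) - 1

/-- The Tjur-R²-like evaluation of the scoring rule `S : ℝ → Fin 2 → ℝ` on the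
table `(a,b,c,d)`, with predicted probabilities `p₁ = a/(a+b)` and
`p₀ = c/(c+d)` (convention `0/0 = 0`). -/
noncomputable def Ev (S : ℝ → Fin 2 → ℝ) (a b c d : ℕ) : ℝ :=
  (1 / ((a : ℝ) + c)) *
    ((a : ℝ) * S ((a : ℝ) / ((a : ℝ) + (b : ℝ))) 1
      + (c : ℝ) * S ((c : ℝ) / ((c : ℝ) + (d : ℝ))) 0)
  - (1 / ((b : ℝ) + d)) *
    ((b : ℝ) * S ((a : ℝ) / ((a : ℝ) + (b : ℝ))) 0
      + (d : ℝ) * S ((c : ℝ) / ((c : ℝ) + (d : ℝ))) 1)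

/-- If the Tjur-R²-like evaluation of `S` equals the Youden index on all
admissible tables, then `S(1,1) - S(0,1) = 1`. -/
theorem scoring_rule_ev_case_b_c_zero (S : ℝ → Fin 2 → ℝ)
    (hS : ∀ a b c d : ℕ, a + c ≠ 0 → b + d ≠ 0 → Ev S a b c d = Youden a b c d) :
    S 1 1 - S 0 1 = 1 := by
  have h := hS 1 0 0 1 (by norm_num) (by norm_num)
  simp only [Ev, Youden] at h
  norm_num at h
  linarith
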